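/- If G is a graph on v vertices (v even) with α(G) = v/2, then the number of independent sets of size v/2 in G is at most 2^{v/2}. -/

import Mathlib

open Finset

/-- A fractional independence weighting of a graph. -/
def IsFIW {V : Type*} (G : SimpleGraph V) (φ : V → ℝ) : Prop :=
  (∀ v, 0 ≤ φ v ∧ φ v ≤ 1) ∧ ∀ u w, G.Adj u w → φ u + φ w ≤ 1

/-- The fractional independence number of a graph. -/
noncomputable def fracIndepNum {V : Type*} [Fintype V] (G : SimpleGraph V) : ℝ :=
  sSup {s : ℝ | ∃ φ : V → ℝ, IsFIW G φ ∧ s = ∑ v, φ v}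

/-- An independent set of a graph. -/
def IsIndepSet {V : Type*} (G : SimpleGraph V) (s : Set V) : Prop :=
  s.Pairwise fun u w => ¬ G.Adj u w

/-- The independence number of a graph. -/
noncomputable def indepNum {V : Type*} [Fintype V] (G : SimpleGraph V) : ℕ :=
  sSup {n : ℕ | ∃ s : Finset V, IsIndepSet G ↑s ∧ s.card = n}

/-!
Fix an independent set `A` of maximum size `α`. Two maximum independent sets `s`, `t` with
`s \ A = t \ A` coincide: `s \ t` and `t \ s` both lie in `A`, so every pair of `s ∪ t` lies in
`s`, in `t` or in `A`, making `s ∪ t` independent; its size is then at most `α = #s`, forcing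
`s = t`. Hence `s ↦ s \ A` embeds the maximum independent sets into the subsets of `Aᶜ`, of
which there are `2 ^ (v - α)`; for `α = v / 2` with `v` even this is `2 ^ (v / 2)`.
-/

section IndependentSets

variable {V : Type*} (G : SimpleGraph V)

theorem isIndepSet_union_of_sdiff_eq [DecidableEq V] {A s t : Finset V} (hA : IsIndepSet G ↑A)
    (hs : IsIndepSet G ↑s) (ht : IsIndepSet G ↑t) (hst : s \ A = t \ A) :
    IsIndepSet G ↑(s ∪ t) := by
  have sdiff_subset : ∀ {u w : Finset V}, u \ A = w \ A → u \ w ⊆ A :=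
    fun {u w} huw x hx => by
      by_contra hxA
      have : x ∈ w \ A := by
        rw [← huw]
        exact mem_sdiff.2 ⟨(mem_sdiff.1 hx).1, hxA⟩
      exact (mem_sdiff.1 hx).2 (mem_sdiff.1 this).1
  have cross : ∀ a ∈ s, ∀ b ∈ t, a ≠ b → ¬ G.Adj a b := fun a ha b hb hab => by
    by_cases hat : a ∈ t
    · exact ht hat hb hab
    by_cases hbs : b ∈ s
    · exact hs ha hbs hab
    exact hA (sdiff_subset hst (mem_sdiff.2 ⟨ha, hat⟩))
      (sdiff_subset hst.symm (mem_sdiff.2 ⟨hb, hbs⟩)) hab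
  rw [IsIndepSet, coe_union, Set.pairwise_union]
  exact ⟨hs, ht, fun a ha b hb hab =>
    ⟨cross a ha b hb hab, fun h => cross a ha b hb hab h.symm⟩⟩

variable [Fintype V]

theorem bddAbove_indepSet_cards :
    BddAbove {n : ℕ | ∃ s : Finset V, IsIndepSet G ↑s ∧ s.card = n} :=
  ⟨Fintype.card V, fun _ ⟨s, _, hs⟩ => hs ▸ card_le_univ s⟩

theorem card_le_indepNum {s : Finset V} (hs : IsIndepSet G ↑s) : s.card ≤ indepNum G :=
  le_csSup (bddAbove_indepSet_cards G) ⟨s, hs, rfl⟩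

theorem exists_isIndepSet_card_eq_indepNum :
    ∃ A : Finset V, IsIndepSet G ↑A ∧ A.card = indepNum G :=
  Nat.sSup_mem (s := {n : ℕ | ∃ s : Finset V, IsIndepSet G ↑s ∧ s.card = n})
    ⟨0, ∅, by simp [IsIndepSet], rfl⟩ (bddAbove_indepSet_cards G)

theorem eq_of_sdiff_eq_of_card_eq_indepNum [DecidableEq V] {A s t : Finset V}
    (hA : IsIndepSet G ↑A) (hs : IsIndepSet G ↑s) (ht : IsIndepSet G ↑t)
    (hsc : s.card = indepNum G) (htc : t.card = indepNum G) (hst : s \ A = t \ A) : s = t := by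
  have hunion := card_le_indepNum G (isIndepSet_union_of_sdiff_eq G hA hs ht hst)
  have hsu : s = s ∪ t := eq_of_subset_of_card_le subset_union_left (hsc ▸ hunion)
  have hts : t ⊆ s := hsu ▸ subset_union_right
  exact (eq_of_subset_of_card_le hts (hsc.trans htc.symm).le).symm

theorem card_maxIndepSets_le [DecidableEq V] :
    Nat.card {s : Finset V // s.card = indepNum G ∧ IsIndepSet G ↑s} ≤
      2 ^ (Fintype.card V - indepNum G) := by
  obtain ⟨A, hA, hAcard⟩ := exists_isIndepSet_card_eq_indepNum G
  let f : {s : Finset V // s.card = indepNum G ∧ IsIndepSet G ↑s} → Aᶜ.powerset :=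
    fun s => ⟨s.1 \ A, mem_powerset.2 fun _ hx => mem_compl.2 (mem_sdiff.1 hx).2⟩
  have hf : Function.Injective f := fun s t hst =>
    Subtype.ext <| eq_of_sdiff_eq_of_card_eq_indepNum G hA s.2.2 t.2.2 s.2.1 t.2.1
      (congrArg Subtype.val hst)
  calc Nat.card {s : Finset V // s.card = indepNum G ∧ IsIndepSet G ↑s}
      ≤ Nat.card Aᶜ.powerset := Nat.card_le_card_of_injective f hf
    _ = 2 ^ (Fintype.card V - indepNum G) := by
      rw [Nat.card_eq_fintype_card, Fintype.card_coe, card_powerset, card_compl, hAcard]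

end IndependentSets

/-- If `G` has `v` vertices (`v` even) and `α(G) = v/2`, then `G` has at most `2^{v/2}`
independent sets of size `v/2`. -/
theorem stmt_8 {V : Type*} [Fintype V] (G : SimpleGraph V)
    (hv : Even (Fintype.card V)) (hα : indepNum G = Fintype.card V / 2) :
    Nat.card {s : Finset V // s.card = Fintype.card V / 2 ∧ IsIndepSet G ↑s} ≤
      2 ^ (Fintype.card V / 2) := by
  classical
  have hhalf : Fintype.card V - Fintype.card V / 2 = Fintype.card V / 2 := by
    obtain ⟨m, hm⟩ := hv
    omega
  simpa only [hα, hhalf] using card_maxIndepSets_le G
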